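/- Let v_1, …, v_n be vectors in ℝ^d and let Q_1, …, Q_n be d×d real positive semidefinite matrices. Then ‖( Σ_{i=1}^n (v_i v_iᵀ − Q_i)² )^{1/2}‖ ≤ sqrt( 2 · max_{1≤i≤n} |v_i|² · ‖Σ_{i=1}^n v_i v_iᵀ‖ ) + sqrt( 2 · max_{1≤i≤n} ‖Q_i‖ · ‖Σ_{i=1}^n Q_i‖ ), where ‖·‖ is the spectral norm and |v| is the Euclidean norm of v ∈ ℝ^d. -/

import Mathlib

/-!
Since `(a - b)² + (a + b)² = 2a² + 2b²`, each summand satisfies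
`(vᵢvᵢᵀ - Qᵢ)² ≤ 2(vᵢvᵢᵀ)² + 2Qᵢ²` in the Loewner order. A positive semidefinite `P` with
`‖P‖ ≤ c` has `P² ≤ cP` (its spectrum lies in `[0, c]`), and `(vvᵀ)² = |v|² vvᵀ`, so the matrix
under the square root is dominated by `2 maxᵢ|vᵢ|² Σ vᵢvᵢᵀ + 2 maxᵢ‖Qᵢ‖ Σ Qᵢ`. The spectral norm is
monotone on positive semidefinite matrices, `‖M^{1/2}‖ = ‖M‖^{1/2}`, and `√(x + y) ≤ √x + √y`.
-/

open Matrix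

noncomputable def specNorm {d : ℕ} (A : Matrix (Fin d) (Fin d) ℝ) : ℝ :=
  ‖(Matrix.toEuclideanCLM (𝕜 := ℝ) A : EuclideanSpace ℝ (Fin d) →L[ℝ] EuclideanSpace ℝ (Fin d))‖

/-- The positive semidefinite square root of a matrix (junk value `0` if the matrix is
not positive semidefinite). -/
noncomputable def psdSqrt {d : ℕ} (M : Matrix (Fin d) (Fin d) ℝ) : Matrix (Fin d) (Fin d) ℝ :=
  by classical exact if h : M.PosSemidef then
    (h.1.eigenvectorUnitary : Matrix (Fin d) (Fin d) ℝ) *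
      Matrix.diagonal ((RCLike.ofReal : ℝ → ℝ) ∘ Real.sqrt ∘ h.1.eigenvalues) *
      (star h.1.eigenvectorUnitary : Matrix (Fin d) (Fin d) ℝ) else 0

lemma Real.sqrt_add_le_add_sqrt {a b : ℝ} (ha : 0 ≤ a) (hb : 0 ≤ b) : √(a + b) ≤ √a + √b := by
  rw [Real.sqrt_le_iff]
  refine ⟨by positivity, ?_⟩
  nlinarith [Real.sq_sqrt ha, Real.sq_sqrt hb, Real.sqrt_nonneg a, Real.sqrt_nonneg b]

section StarOrderedRing

variable {R : Type*} [Ring R] [StarRing R] [PartialOrder R] [StarOrderedRing R]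

lemma IsSelfAdjoint.sub_sq_le_two_mul_add_sq {a b : R} (ha : IsSelfAdjoint a)
    (hb : IsSelfAdjoint b) : (a - b) ^ 2 ≤ 2 * (a ^ 2 + b ^ 2) := by
  have h : 0 ≤ star (a + b) * (a + b) := star_mul_self_nonneg _
  rw [star_add, ha.star_eq, hb.star_eq] at h
  refine sub_nonneg.mp (h.trans_eq ?_)
  noncomm_ring

lemma IsSelfAdjoint.sub_sq_le_of_sq_le_smul [Module ℝ R] {a b : R} (ha : IsSelfAdjoint a)
    (hb : IsSelfAdjoint b) {c c' : ℝ} (hac : a ^ 2 ≤ c • a) (hbc : b ^ 2 ≤ c' • b) :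
    (a - b) ^ 2 ≤ (2 * c) • a + (2 * c') • b := by
  have h := add_le_add hac hbc
  calc (a - b) ^ 2 ≤ 2 * (a ^ 2 + b ^ 2) := ha.sub_sq_le_two_mul_add_sq hb
    _ ≤ (c • a + c' • b) + (c • a + c' • b) := by rw [two_mul]; exact add_le_add h h
    _ = (2 * c) • a + (2 * c') • b := by module

end StarOrderedRing

section IsometricCFC

open IsometricContinuousFunctionalCalculus

variable {A : Type*} [NormedRing A] [StarRing A] [NormedAlgebra ℝ A] [PartialOrder A]
  [StarOrderedRing A] [IsometricContinuousFunctionalCalculus ℝ A IsSelfAdjoint]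

lemma IsSelfAdjoint.le_algebraMap_norm {a : A} (ha : IsSelfAdjoint a) :
    a ≤ algebraMap ℝ A ‖a‖ :=
  le_algebraMap_of_spectrum_le fun x hx => (Real.le_norm_self x).trans (norm_spectrum_le a hx)

variable [NonnegSpectrumClass ℝ A]

lemma norm_le_norm_of_nonneg_of_le {a b : A} (ha : 0 ≤ a) (hab : a ≤ b) : ‖a‖ ≤ ‖b‖ := by
  have hle : a ≤ algebraMap ℝ A ‖b‖ :=
    hab.trans (IsSelfAdjoint.of_nonneg (ha.trans hab)).le_algebraMap_norm
  rw [le_algebraMap_iff_spectrum_le (IsSelfAdjoint.of_nonneg ha)] at hle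
  rw [← cfc_id' ℝ a (IsSelfAdjoint.of_nonneg ha)]
  refine norm_cfc_le (norm_nonneg b) fun x hx => ?_
  rw [Real.norm_of_nonneg (spectrum_nonneg_of_nonneg ha hx)]
  exact hle x hx

lemma sq_le_smul_of_nonneg_of_norm_le {a : A} (ha : 0 ≤ a) {c : ℝ} (hc : ‖a‖ ≤ c) :
    a ^ 2 ≤ c • a := by
  have hsa := IsSelfAdjoint.of_nonneg ha
  have h : c • a - a ^ 2 = cfc (fun x : ℝ => c * x - x ^ 2) a := by
    rw [cfc_sub (fun x => c * x) (fun x => x ^ 2), cfc_const_mul_id c a, cfc_pow_id a 2]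
  refine sub_nonneg.mp (h ▸ cfc_nonneg fun x hx => ?_)
  have hx0 : 0 ≤ x := spectrum_nonneg_of_nonneg ha hx
  have hxc : x ≤ c := (Real.le_norm_self x).trans ((norm_spectrum_le a hx).trans hc)
  nlinarith

lemma sqrt_norm_le_of_le_smul_add_smul {m x y : A} (hm : 0 ≤ m) {a b : ℝ} (ha : 0 ≤ a)
    (hb : 0 ≤ b) (h : m ≤ a • x + b • y) : √‖m‖ ≤ √(a * ‖x‖) + √(b * ‖y‖) := by
  have hnorm : ‖m‖ ≤ a * ‖x‖ + b * ‖y‖ := by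
    refine (norm_le_norm_of_nonneg_of_le hm h).trans ((norm_add_le _ _).trans_eq ?_)
    rw [norm_smul, norm_smul, Real.norm_of_nonneg ha, Real.norm_of_nonneg hb]
  exact (Real.sqrt_le_sqrt hnorm).trans (Real.sqrt_add_le_add_sqrt (by positivity) (by positivity))

end IsometricCFC

open scoped Matrix.Norms.L2Operator MatrixOrder

lemma specNorm_eq_norm {d : ℕ} (A : Matrix (Fin d) (Fin d) ℝ) : specNorm A = ‖A‖ := rfl

lemma psdSqrt_eq_cfcSqrt {d : ℕ} {M : Matrix (Fin d) (Fin d) ℝ} (hM : M.PosSemidef) :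
    psdSqrt M = CFC.sqrt M := by
  unfold psdSqrt
  rw [dif_pos hM, CFC.sqrt_eq_real_sqrt M (nonneg_iff_posSemidef.mpr hM),
    cfcₙ_eq_cfc (hf0 := Real.sqrt_zero), hM.1.cfc_eq]
  simp [IsHermitian.cfc, Unitary.conjStarAlgAut_apply]

lemma Matrix.vecMulVec_self_sq_le {m : Type*} [Fintype m] [DecidableEq m] (v : m → ℝ) {c : ℝ}
    (hc : v ⬝ᵥ v ≤ c) : vecMulVec v v ^ 2 ≤ c • vecMulVec v v := by
  have h : c • vecMulVec v v - vecMulVec v v ^ 2 = (c - v ⬝ᵥ v) • vecMulVec v v := by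
    rw [sq, vecMulVec_mul_vecMulVec, vecMulVec_smul, sub_smul]
  refine sub_nonneg.mp (h ▸ nonneg_iff_posSemidef.mpr ?_)
  simpa using (posSemidef_vecMulVec_self_star v).smul (sub_nonneg.mpr hc)

lemma Matrix.isSelfAdjoint_vecMulVec_self {m : Type*} (v : m → ℝ) :
    IsSelfAdjoint (vecMulVec v v) := by
  ext i j
  simp [vecMulVec_apply, mul_comm]

theorem stmt9_general {d n : ℕ} (v : Fin n → Fin d → ℝ)
    (Q : Fin n → Matrix (Fin d) (Fin d) ℝ) (hQ : ∀ i, (Q i).PosSemidef) :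
    specNorm (psdSqrt (∑ i, (Matrix.vecMulVec (v i) (v i) - Q i) ^ 2)) ≤
      Real.sqrt (2 * (⨆ i, ∑ j, v i j ^ 2) *
          specNorm (∑ i, Matrix.vecMulVec (v i) (v i))) +
        Real.sqrt (2 * (⨆ i, specNorm (Q i)) * specNorm (∑ i, Q i)) := by
  set c := ⨆ i, ∑ j, v i j ^ 2
  set c' := ⨆ i, specNorm (Q i)
  have hv i : vecMulVec (v i) (v i) ^ 2 ≤ c • vecMulVec (v i) (v i) := by
    refine vecMulVec_self_sq_le (v i) ?_
    simp only [dotProduct, ← sq]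
    exact le_ciSup (Finite.bddAbove_range fun i => ∑ j, v i j ^ 2) i
  have hQc' i : Q i ^ 2 ≤ c' • Q i :=
    sq_le_smul_of_nonneg_of_norm_le (nonneg_iff_posSemidef.mpr (hQ i))
      (le_ciSup (Finite.bddAbove_range fun i => specNorm (Q i)) i)
  set M := ∑ i, (vecMulVec (v i) (v i) - Q i) ^ 2
  have hM0 : 0 ≤ M := Finset.sum_nonneg fun i _ =>
    ((isSelfAdjoint_vecMulVec_self (v i)).sub (hQ i).isHermitian).sq_nonneg
  have hM : M ≤ (2 * c) • ∑ i, vecMulVec (v i) (v i) + (2 * c') • ∑ i, Q i := by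
    rw [Finset.smul_sum, Finset.smul_sum, ← Finset.sum_add_distrib]
    exact Finset.sum_le_sum fun i _ => (isSelfAdjoint_vecMulVec_self (v i)).sub_sq_le_of_sq_le_smul
      (hQ i).isHermitian (hv i) (hQc' i)
  simp only [specNorm_eq_norm]
  rw [psdSqrt_eq_cfcSqrt (nonneg_iff_posSemidef.mp hM0), CFC.norm_sqrt M hM0]
  exact sqrt_norm_le_of_le_smul_add_smul hM0
    (mul_nonneg zero_le_two (Real.iSup_nonneg fun i => by positivity))
    (mul_nonneg zero_le_two (Real.iSup_nonneg fun i => norm_nonneg _)) hM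

/-- for vectors `v₁,…,vₙ ∈ ℝ^d` and positive semidefinite `Q₁,…,Qₙ`,
`‖(Σ (vᵢvᵢᵀ − Qᵢ)²)^{1/2}‖ ≤ sqrt(2 maxᵢ|vᵢ|² ‖Σ vᵢvᵢᵀ‖) + sqrt(2 maxᵢ‖Qᵢ‖ ‖Σ Qᵢ‖)`. -/
theorem stmt9 {d n : ℕ} (hn : 0 < n) (v : Fin n → Fin d → ℝ)
    (Q : Fin n → Matrix (Fin d) (Fin d) ℝ) (hQ : ∀ i, (Q i).PosSemidef) :
    specNorm (psdSqrt (∑ i, (Matrix.vecMulVec (v i) (v i) - Q i) ^ 2)) ≤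
      Real.sqrt (2 * (⨆ i, ∑ j, v i j ^ 2) *
          specNorm (∑ i, Matrix.vecMulVec (v i) (v i))) +
        Real.sqrt (2 * (⨆ i, specNorm (Q i)) * specNorm (∑ i, Q i)) :=
  stmt9_general v Q hQ
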